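/- Let a > 0 and g : [-4a, 4a] → ℝ be continuously differentiable, and assume that for all τ with |τ| < 2a, all s with |s| ≤ 4a, and all λ with 0 < λ < a and λ < |s - τ|, one has g(τ + λ²(s-τ)/|s-τ|²) - 4·ln(|s-τ|/λ) ≤ g(s). Then |g'(s)| ≤ 2/a for all s with |s| ≤ a. -/

import Mathlib

/-! Fix `s` with `|s| ≤ a`, a sign `σ = ±1` and `0 < λ < a`, and apply the hypothesis with the
centre `τ = s - σλ` and the point `s + σx`, `0 < x < a`. Inversion in the circle of radius `λ`
about `τ` sends `s + σx` to `s - σλx/(λ + x)`, so the function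
`x ↦ g(s + σx) - g(s - σλx/(λ + x)) + 4 log((λ + x)/λ)` is nonnegative for small `x > 0` and
vanishes at `0`. Its derivative `2σ g'(s) + 4/λ` at `0` is therefore nonnegative, which gives
`|g'(s)| ≤ 2/λ`; letting `λ → a` finishes the proof. -/

open Real Set Filter Topology

lemma HasDerivAt.nonneg_of_eventually_le_right {f : ℝ → ℝ} {f' x : ℝ} (hf : HasDerivAt f f' x)
    (h : ∀ᶠ y in 𝓝[>] x, f x ≤ f y) : 0 ≤ f' := by
  refine ge_of_tendsto (hasDerivAt_iff_tendsto_slope_left_right.mp hf).2 ?_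
  filter_upwards [h, self_mem_nhdsWithin] with y hy (hxy : x < y)
  rw [slope_def_field]
  exact div_nonneg (sub_nonneg.2 hy) (sub_nonneg.2 hxy.le)

lemma inversion_along_ray {s σ lam x : ℝ} (hσ : |σ| = 1) (hx : lam + x ≠ 0) :
    (s - σ * lam) + lam ^ 2 * ((s + σ * x) - (s - σ * lam)) / |(s + σ * x) - (s - σ * lam)| ^ 2
      = s - σ * (lam * x / (lam + x)) := by
  have hσ2 : σ ^ 2 = 1 := by rw [← sq_abs, hσ, one_pow]
  rw [sq_abs, show (s + σ * x) - (s - σ * lam) = σ * (lam + x) by ring, mul_pow, hσ2, one_mul]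
  field_simp
  ring

noncomputable def inversionGap (g : ℝ → ℝ) (s σ lam x : ℝ) : ℝ :=
  g (s + σ * x) - g (s - σ * (lam * x / (lam + x))) + 4 * log ((lam + x) / lam)

lemma inversionGap_zero (g : ℝ → ℝ) {lam : ℝ} (hlam : lam ≠ 0) (s σ : ℝ) :
    inversionGap g s σ lam 0 = 0 := by
  simp [inversionGap, hlam]

lemma hasDerivAt_inversionGap {g : ℝ → ℝ} {d s : ℝ} (hg : HasDerivAt g d s) (σ : ℝ) {lam : ℝ}
    (hlam : lam ≠ 0) : HasDerivAt (inversionGap g s σ lam) (2 * (σ * d) + 4 / lam) 0 := by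
  have hlam0 : lam + 0 ≠ 0 := by simpa using hlam
  have hray : HasDerivAt (fun x : ℝ => s + σ * x) σ 0 := by
    simpa using ((hasDerivAt_id' 0).const_mul σ).const_add s
  have hinv : HasDerivAt (fun x : ℝ => lam * x / (lam + x)) 1 0 :=
    (((hasDerivAt_id' 0).const_mul lam).div ((hasDerivAt_id' 0).const_add lam) hlam0).congr_deriv
      (by field_simp; ring)
  have hinvRay : HasDerivAt (fun x : ℝ => s - σ * (lam * x / (lam + x))) (-σ) 0 := by
    simpa using (hinv.const_mul σ).const_sub s
  have hlog : HasDerivAt (fun x : ℝ => 4 * log ((lam + x) / lam)) (4 / lam) 0 :=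
    (((((hasDerivAt_id' 0).const_add lam).div_const lam).log (by simpa using hlam)).const_mul
      4).congr_deriv (by field_simp; ring)
  have hg₁ : HasDerivAt g d (s + σ * 0) := by simpa using hg
  have hg₂ : HasDerivAt g d (s - σ * (lam * 0 / (lam + 0))) := by simpa using hg
  exact (((hg₁.comp 0 hray).sub (hg₂.comp 0 hinvRay)).add hlog).congr_deriv (by ring)

section

variable {a : ℝ} {g : ℝ → ℝ}
  (h : ∀ τ s lam : ℝ, |τ| < 2 * a → |s| ≤ 4 * a → 0 < lam → lam < a → lam < |s - τ| →
    g (τ + lam ^ 2 * (s - τ) / |s - τ| ^ 2) - 4 * Real.log (|s - τ| / lam) ≤ g s)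
include h

lemma inversionGap_nonneg {s σ lam x : ℝ} (hs : |s| ≤ a) (hσ : |σ| = 1) (hlam : 0 < lam)
    (hlam_a : lam < a) (hx : 0 < x) (hx_a : x < a) : 0 ≤ inversionGap g s σ lam x := by
  have hdist : |(s + σ * x) - (s - σ * lam)| = lam + x := by
    rw [show (s + σ * x) - (s - σ * lam) = σ * (lam + x) by ring, abs_mul, hσ, one_mul,
      abs_of_pos (by linarith)]
  have hcentre : |s - σ * lam| < 2 * a := by
    calc |s - σ * lam| ≤ |s| + |σ * lam| := abs_sub _ _
      _ = |s| + lam := by rw [abs_mul, hσ, one_mul, abs_of_pos hlam]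
      _ < 2 * a := by linarith
  have hpoint : |s + σ * x| ≤ 4 * a := by
    calc |s + σ * x| ≤ |s| + |σ * x| := abs_add_le _ _
      _ = |s| + x := by rw [abs_mul, hσ, one_mul, abs_of_pos hx]
      _ ≤ 4 * a := by linarith
  have key := h _ _ lam hcentre hpoint hlam hlam_a (by rw [hdist]; linarith)
  rw [inversion_along_ray hσ (by linarith), hdist] at key
  unfold inversionGap
  linarith

lemma neg_two_div_le_mul_deriv {s σ lam d : ℝ} (hd : HasDerivAt g d s) (hs : |s| ≤ a)
    (hσ : |σ| = 1) (hlam : 0 < lam) (hlam_a : lam < a) : -(2 / lam) ≤ σ * d := by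
  have hslope := (hasDerivAt_inversionGap hd σ hlam.ne').nonneg_of_eventually_le_right <| by
    filter_upwards [Ioo_mem_nhdsGT (hlam.trans hlam_a)] with x hx
    rw [inversionGap_zero g hlam.ne']
    exact inversionGap_nonneg h hs hσ hlam hlam_a hx.1 hx.2
  have : 4 / lam = 2 * (2 / lam) := by ring
  linarith

lemma abs_le_two_div_of_hasDerivAt {s lam d : ℝ} (hd : HasDerivAt g d s) (hs : |s| ≤ a)
    (hlam : 0 < lam) (hlam_a : lam < a) : |d| ≤ 2 / lam := by
  have hplus := neg_two_div_le_mul_deriv h hd hs abs_one hlam hlam_a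
  have hminus := neg_two_div_le_mul_deriv h hd hs (by norm_num : |(-1 : ℝ)| = 1) hlam hlam_a
  rw [abs_le]
  constructor <;> linarith

end

theorem stmt1 (a : ℝ) (ha : 0 < a) (g : ℝ → ℝ)
    (hg : ContDiffOn ℝ 1 g (Set.Icc (-(4 * a)) (4 * a)))
    (h : ∀ τ s lam : ℝ, |τ| < 2 * a → |s| ≤ 4 * a → 0 < lam → lam < a → lam < |s - τ| →
      g (τ + lam ^ 2 * (s - τ) / |s - τ| ^ 2) - 4 * Real.log (|s - τ| / lam) ≤ g s) :
    ∀ s : ℝ, |s| ≤ a → |deriv g s| ≤ 2 / a := by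
  intro s hs
  have hd : HasDerivAt g (deriv g s) s := by
    obtain ⟨hs₁, hs₂⟩ := abs_le.mp hs
    exact ((hg.differentiableOn one_ne_zero).differentiableAt
      (Icc_mem_nhds (by linarith) (by linarith))).hasDerivAt
  have hlim : Tendsto (fun lam : ℝ => 2 / lam) (𝓝[<] a) (𝓝 (2 / a)) :=
    ((continuousAt_const.div continuousAt_id ha.ne').tendsto).mono_left nhdsWithin_le_nhds
  refine ge_of_tendsto hlim ?_
  filter_upwards [Ioo_mem_nhdsLT ha] with lam hlam
  exact abs_le_two_div_of_hasDerivAt h hd hs hlam.1 hlam.2
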